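/- arXiv:2503.00696 — 4 statements merged into one kernel-verified Lean document; each statement's English description precedes it below -/
import Mathlib

section
/- There exist two infinite disjoint sequences of primes p_1, p_2, ... and q_1, q_2, ..., all congruent to 1 modulo 4, such that for every i and j, p_i is a quadratic residue modulo q_j. -/
open Nat

/-- State: (current prime, accumulated modulus). Invariants: prime, %4=1,
    r ∣ P, 4 ∣ P, P ≠ 0, and next prime ≡ 1 mod current P. -/
noncomputable def qrSeqAux : ℕ → ℕ × ℕ
  | 0 => (5, 20)
  | n + 1 =>
    let prev := qrSeqAux n
    let p := (Nat.exists_prime_gt_modEq_one (k := max prev.2 1) prev.1 (by positivity)).choose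
    (p, prev.2 * p)

noncomputable def qrSeq (n : ℕ) : ℕ := (qrSeqAux n).1

lemma qrSeqAux_spec (n : ℕ) :
    (qrSeqAux (n+1)).1.Prime ∧ (qrSeqAux n).1 < (qrSeqAux (n+1)).1 ∧
    (qrSeqAux (n+1)).1 ≡ 1 [MOD max (qrSeqAux n).2 1] := by
  have h := (Nat.exists_prime_gt_modEq_one (k := max (qrSeqAux n).2 1)
    (qrSeqAux n).1 (by positivity)).choose_spec
  exact ⟨h.1, h.2.1, h.2.2⟩

lemma qrSeqAux_snd (n : ℕ) : (qrSeqAux (n+1)).2 = (qrSeqAux n).2 * (qrSeqAux (n+1)).1 := rfl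

lemma qrSeq_invariant (n : ℕ) :
    (qrSeq n).Prime ∧ qrSeq n % 4 = 1 ∧ 4 ∣ (qrSeqAux n).2 ∧ qrSeq n ∣ (qrSeqAux n).2 ∧
      (qrSeqAux n).2 ≠ 0 := by
  induction n with
  | zero => exact ⟨by norm_num [qrSeq, qrSeqAux], by norm_num [qrSeq, qrSeqAux],
      by norm_num [qrSeqAux], by norm_num [qrSeq, qrSeqAux], by norm_num [qrSeqAux]⟩
  | succ n ih =>
    obtain ⟨hp, h4, hP4, hrP, hP0⟩ := ih
    obtain ⟨hp', _, hmod⟩ := qrSeqAux_spec n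
    have hmax : max (qrSeqAux n).2 1 = (qrSeqAux n).2 := max_eq_left (Nat.one_le_iff_ne_zero.mpr hP0)
    rw [hmax] at hmod
    have hmod4 : qrSeq (n+1) ≡ 1 [MOD 4] := hmod.of_dvd hP4
    refine ⟨hp', ?_, ?_, ?_, ?_⟩
    · have := hmod4
      unfold Nat.ModEq at this
      simpa using this
    · rw [qrSeqAux_snd]; exact hP4.mul_right _
    · rw [qrSeqAux_snd]; exact dvd_mul_left _ _
    · rw [qrSeqAux_snd]; exact mul_ne_zero hP0 hp'.ne_zero

lemma qrSeq_strictMono : StrictMono qrSeq :=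
  strictMono_nat_of_lt_succ fun n => (qrSeqAux_spec n).2.1

lemma qrSeq_dvd_P {a n : ℕ} (h : a ≤ n) : qrSeq a ∣ (qrSeqAux n).2 := by
  induction n with
  | zero => exact le_zero_iff.mp h ▸ (qrSeq_invariant 0).2.2.2.1
  | succ n ih =>
    rcases Nat.lt_succ_iff_lt_or_eq.mp (Nat.lt_succ_of_le h) with h' | h'
    · rw [qrSeqAux_snd]
      exact (ih (Nat.lt_succ_iff.mp h')).mul_right _
    · exact h' ▸ (qrSeq_invariant (n+1)).2.2.2.1

lemma qrSeq_modEq {a b : ℕ} (h : a < b) : qrSeq b ≡ 1 [MOD qrSeq a] := by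
  obtain ⟨m, rfl⟩ := Nat.exists_eq_add_of_lt h
  have hP0 := (qrSeq_invariant (a + m)).2.2.2.2
  have hmax : max (qrSeqAux (a + m)).2 1 = (qrSeqAux (a + m)).2 :=
    max_eq_left (Nat.one_le_iff_ne_zero.mpr hP0)
  have hmod := (qrSeqAux_spec (a + m)).2.2
  rw [hmax] at hmod
  exact hmod.of_dvd (qrSeq_dvd_P (Nat.le_add_right a m))

lemma qrSeq_isSquare {a b : ℕ} (h : a ≠ b) : IsSquare ((qrSeq a : ZMod (qrSeq b))) := by
  have hpa := (qrSeq_invariant a).1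
  have hpb := (qrSeq_invariant b).1
  haveI : Fact (qrSeq a).Prime := ⟨hpa⟩
  haveI : Fact (qrSeq b).Prime := ⟨hpb⟩
  rcases h.lt_or_gt with hab | hba
  · -- a < b : use reciprocity. qrSeq b ≡ 1 mod qrSeq a.
    have hmod := qrSeq_modEq hab
    have h1 : ((qrSeq b : ℕ) : ZMod (qrSeq a)) = 1 := by
      have := (ZMod.natCast_eq_natCast_iff _ _ _).mpr hmod
      simpa using this
    have hne : ((qrSeq b : ℕ) : ZMod (qrSeq a)) ≠ 0 := by rw [h1]; exact one_ne_zero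
    have hl1 : legendreSym (qrSeq a) (qrSeq b) = 1 := by
      rw [legendreSym.eq_one_iff' _ hne, h1]; exact IsSquare.one
    have hb2 : qrSeq b ≠ 2 := by
      intro h2
      have := (qrSeq_invariant b).2.1
      rw [h2] at this; norm_num at this
    have := legendreSym.quadratic_reciprocity_one_mod_four (qrSeq_invariant a).2.1 hb2
    rw [hl1] at this
    have hne' : ((qrSeq a : ℕ) : ZMod (qrSeq b)) ≠ 0 := by
      have : ¬ (qrSeq b ∣ qrSeq a) := by
        intro hd
        exact absurd ((Nat.prime_dvd_prime_iff_eq hpb hpa).mp hd)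
          (qrSeq_strictMono hab).ne'
      simpa [ZMod.natCast_eq_zero_iff] using this
    exact (legendreSym.eq_one_iff' _ hne').mp this
  · -- b < a : qrSeq a ≡ 1 mod qrSeq b, so it's literally 1.
    have hmod := qrSeq_modEq hba
    have h1 : ((qrSeq a : ℕ) : ZMod (qrSeq b)) = 1 := by
      have := (ZMod.natCast_eq_natCast_iff _ _ _).mpr hmod
      simpa using this
    rw [h1]; exact IsSquare.one

/-- There exist two infinite disjoint sequences of primes `p 1, p 2, ...` and
`q 1, q 2, ...`, all congruent to 1 modulo 4, such that for every `i` and `j`,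
`p i` is a quadratic residue modulo `q j`. -/
theorem exists_disjoint_sequences_of_primes_one_mod_four_quadratic_residues :
    ∃ p q : ℕ → ℕ,
      Function.Injective p ∧ Function.Injective q ∧
      Disjoint (Set.range p) (Set.range q) ∧
      (∀ i, (p i).Prime ∧ p i % 4 = 1) ∧
      (∀ j, (q j).Prime ∧ q j % 4 = 1) ∧
      (∀ i j, IsSquare ((p i : ZMod (q j)))) := by
  refine ⟨fun i => qrSeq (2 * i), fun j => qrSeq (2 * j + 1), ?_, ?_, ?_, ?_, ?_, ?_⟩
  · intro a b hab
    have := qrSeq_strictMono.injective hab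
    omega
  · intro a b hab
    have := qrSeq_strictMono.injective hab
    omega
  · rw [Set.disjoint_left]
    rintro x ⟨i, rfl⟩ ⟨j, hj⟩
    have := qrSeq_strictMono.injective hj
    omega
  · exact fun i => ⟨(qrSeq_invariant _).1, (qrSeq_invariant _).2.1⟩
  · exact fun j => ⟨(qrSeq_invariant _).1, (qrSeq_invariant _).2.1⟩
  · intro i j
    exact qrSeq_isSquare (by omega)
end

section
/- Let G be a finite group of order s and A a G-module that is generated by r elements as an abelian group. Then the first cohomology group H^1(G, A) is finite of order dividing s^{r(s-1)}. -/
open Submodule Function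

lemma aux_card_core {M : Type*} [AddCommGroup M] [Module ℤ M] {s : ℕ} (hs : 0 < s)
    [Module (ZMod s) M] (compat : ∀ (z : ℤ) (a : M), (z : ZMod s) • a = z • a)
    {ι : Type} [Fintype ι] (v : ι → M)
    (hv : Submodule.span ℤ (Set.range v) = ⊤) :
    Finite M ∧ Nat.card M ∣ s ^ Fintype.card ι := by
  haveI : NeZero s := ⟨hs.ne'⟩
  have hv' : ∀ x : M, x ∈ Submodule.span (ZMod s) (Set.range v) := by
    intro x
    have hx : x ∈ Submodule.span ℤ (Set.range v) := hv ▸ trivial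
    refine Submodule.span_induction (fun y hy => Submodule.subset_span hy)
      (Submodule.zero_mem _) (fun a b _ _ ha hb => Submodule.add_mem _ ha hb)
      (fun z a _ ha => ?_) hx
    have hmem := Submodule.smul_mem (Submodule.span (ZMod s) (Set.range v)) ((z : ZMod s)) ha
    rwa [compat z a, ← int_smul_eq_zsmul ‹Module ℤ M› z a] at hmem
  have hsurj : Function.Surjective
      ⇑((Fintype.linearCombination (ZMod s) v)) := by
    intro x
    obtain ⟨c, hc⟩ := (Submodule.mem_span_range_iff_exists_fun (ZMod s)).1 (hv' x)
    exact ⟨c, by simpa [Fintype.linearCombination_apply] using hc⟩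
  have hfin : Finite M := Finite.of_surjective _ hsurj
  refine ⟨hfin, ?_⟩
  have hdvd := AddSubgroup.card_dvd_of_surjective
    ((Fintype.linearCombination (ZMod s) v)).toAddMonoidHom hsurj
  have : Nat.card (ι → ZMod s) = s ^ Fintype.card ι := by
    simp [Nat.card_pi, Nat.card_eq_fintype_card, ZMod.card s]
  rwa [this] at hdvd

/-- A module annihilated by `s` and spanned by a finite family has cardinality dividing
`s ^ (number of generators)`. -/
lemma aux_card_dvd {M : Type*} [AddCommGroup M] [Module ℤ M] {s : ℕ} (hs : 0 < s)
    (hann : ∀ x : M, s • x = 0) {ι : Type} [Fintype ι] (v : ι → M)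
    (hv : Submodule.span ℤ (Set.range v) = ⊤) :
    Finite M ∧ Nat.card M ∣ s ^ Fintype.card ι := by
  letI : Module (ZMod s) M := AddCommGroup.zmodModule hann
  exact aux_card_core hs (fun z a => Int.cast_smul_eq_zsmul (ZMod s) z a) v hv

/-- If `M` embeds in a module spanned by a finite family, then `M` is spanned by at most
as many elements. -/
lemma aux_gen {M P : Type*} [AddCommGroup M] [instM : Module ℤ M] [AddCommGroup P]
    [instP : Module ℤ P]
    (e : M →ₗ[ℤ] P) (he : Function.Injective e) {ι : Type} [Fintype ι] [DecidableEq ι]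
    (w : ι → P) (hw : Submodule.span ℤ (Set.range w) = ⊤) :
    ∃ (m : ℕ) (v : Fin m → M), m ≤ Fintype.card ι ∧ Submodule.span ℤ (Set.range v) = ⊤ := by
  set θ : (ι → ℤ) →ₗ[ℤ] P := Fintype.linearCombination ℤ w with hθ
  have hθs : Function.Surjective θ := by
    intro x
    obtain ⟨c, hc⟩ := (Submodule.mem_span_range_iff_exists_fun ℤ).1 (hw ▸ Submodule.mem_top (x := x))
    exact ⟨c, by simpa [hθ, Fintype.linearCombination_apply] using hc⟩
  set M₀ : Submodule ℤ (ι → ℤ) := (LinearMap.range e).comap θ with hM₀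
  obtain ⟨m, bM⟩ := M₀.basisOfPid (Pi.basisFun ℤ ι)
  have hm : m ≤ Fintype.card ι := by
    have h1 : (m : Cardinal) = Module.rank ℤ M₀ := by
      rw [rank_eq_card_basis bM, Fintype.card_fin]
    have h2 := Submodule.rank_le M₀
    rw [rank_fun', ← h1] at h2
    exact_mod_cast h2
  have hmem : ∀ i : Fin m, ∃ x : M, e x = θ (bM i).1 := fun i => (bM i).2
  choose v hv using hmem
  refine ⟨m, v, hm, ?_⟩
  rw [eq_top_iff]
  intro x _
  obtain ⟨c, hc⟩ := hθs (e x)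
  have hcM : c ∈ M₀ := by
    simp only [hM₀, Submodule.mem_comap, hc]
    exact LinearMap.mem_range_self e x
  have hspan : (⟨c, hcM⟩ : M₀) ∈ Submodule.span ℤ (Set.range bM) := Module.Basis.mem_span bM _
  have himg : e x ∈ Submodule.map (θ.comp M₀.subtype) (Submodule.span ℤ (Set.range bM)) :=
    ⟨⟨c, hcM⟩, hspan, hc⟩
  rw [Submodule.map_span, ← Set.range_comp] at himg
  have hrange : Set.range (θ.comp M₀.subtype ∘ bM) = e '' Set.range v := by
    ext p
    constructor
    · rintro ⟨i, rfl⟩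
      exact ⟨v i, ⟨i, rfl⟩, hv i⟩
    · rintro ⟨_, ⟨i, rfl⟩, rfl⟩
      exact ⟨i, (hv i).symm⟩
  rw [hrange, Submodule.span_image] at himg
  obtain ⟨y, hy, hyx⟩ := himg
  rwa [← he hyx]

/-- A finite product of copies of a module spanned by `a : Fin r → A` is spanned by the
corresponding single-coordinate family. -/
lemma aux_pi_gen {η : Type} [Fintype η] [DecidableEq η] {A : Type*} [AddCommGroup A]
    [Module ℤ A] {r : ℕ} (a : Fin r → A) (ha : Submodule.span ℤ (Set.range a) = ⊤) :
    @Submodule.span ℤ (η → A) _ _ (Pi.module η (fun _ => A) ℤ)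
      (Set.range fun p : η × Fin r => Pi.single p.1 (a p.2)) = ⊤ := by
  letI : Module ℤ (η → A) := Pi.module η (fun _ => A) ℤ
  rw [eq_top_iff]
  intro x _
  have hx : x = ∑ g : η, Pi.single g (x g) := (Finset.univ_sum_single x).symm
  rw [hx]
  refine Submodule.sum_mem _ fun g _ => ?_
  have hxg : x g ∈ Submodule.span ℤ (Set.range a) := ha ▸ trivial
  have hmap : Pi.single g (x g) ∈ Submodule.map (LinearMap.single ℤ (fun _ : η => A) g)
      (Submodule.span ℤ (Set.range a)) := ⟨x g, hxg, rfl⟩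
  rw [Submodule.map_span, ← Set.range_comp] at hmap
  refine Submodule.span_mono ?_ hmap
  rintro _ ⟨i, rfl⟩
  exact ⟨(g, i), rfl⟩

/-- Let `G` be a finite group of order `s` and `A` a `G`-module that is generated by `r`
elements as an abelian group. Then `H¹(G, A)` is finite of order dividing `s ^ (r * (s - 1))`. -/
theorem h1_card_dvd_of_fg (G : Type) [Group G] [Fintype G] [DecidableEq G]
    (A : Rep ℤ G) (r s : ℕ) (hs : Fintype.card G = s)
    (hgen : ∃ t : Finset A, t.card = r ∧ Submodule.span ℤ (t : Set A) = ⊤) :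
    Finite (groupCohomology.H1 A) ∧
      Nat.card (groupCohomology.H1 A) ∣ s ^ (r * (s - 1)) := by
  classical
  letI : Module ℤ ↥(groupCohomology.cocycles₁ A) := (groupCohomology.cocycles₁ A).module
  letI : Module ℤ (groupCohomology.H1 A) :=
    inferInstance
  obtain ⟨t, htr, htspan⟩ := hgen
  subst hs htr
  set s := Fintype.card G with hs
  have hs0 : 0 < s := Fintype.card_pos
  -- generators of A as a family
  set a : Fin t.card → A := fun i => ((t.equivFin.symm i : A) : A) with ha
  have haspan : Submodule.span ℤ (Set.range a) = ⊤ := by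
    have hra : Set.range a = (t : Set A) := by
      ext x
      constructor
      · rintro ⟨i, rfl⟩; exact (t.equivFin.symm i).2
      · intro hx; exact ⟨t.equivFin ⟨x, hx⟩, by simp [ha]⟩
    rw [hra, htspan]
  -- the evaluation embedding of 1-cocycles
  set e := (@LinearMap.funLeft ℤ A _ _ A.hV2 _ _ (Subtype.val : {g : G // g ≠ 1} → G)).comp
    (groupCohomology.cocycles₁ A).subtype with he
  have hei : Function.Injective e := by
    intro f f' hff'
    ext g
    rcases eq_or_ne g 1 with rfl | hg
    · rw [groupCohomology.cocycles₁_map_one, groupCohomology.cocycles₁_map_one]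
    · exact congr_fun hff' ⟨g, hg⟩
  -- generators of the target
  have hwspan := @aux_pi_gen {g : G // g ≠ 1} _ _ A _ A.hV2 _ a (by
    rw [show A.hV2 = AddCommGroup.toIntModule A from Subsingleton.elim _ _]; exact haspan)
  obtain ⟨m, v, hm, hvspan⟩ := aux_gen (instM := (groupCohomology.cocycles₁ A).module) (instP := @Pi.module _ _ _ _ _ (fun _ => A.hV2)) e hei _ hwspan
  have hcard : Fintype.card ({g : G // g ≠ 1} × Fin t.card) = (s - 1) * t.card := by
    rw [Fintype.card_prod, Fintype.card_fin]
    congr 1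
    have h1 : Fintype.card {g : G // g ≠ 1} = s - Fintype.card {g : G // g = 1} :=
      Fintype.card_subtype_compl _
    rw [h1, Fintype.card_subtype_eq (1 : G)]
  rw [hcard] at hm
  -- generators of H¹
  set q := (groupCohomology.H1π A).hom with hq
  have hqsurj : Function.Surjective q := (ModuleCat.epi_iff_surjective _).1 inferInstance
  have hqv : Submodule.span ℤ (Set.range (q ∘ v)) = ⊤ := by
    rw [Set.range_comp, Submodule.span_image, hvspan, Submodule.map_top,
      LinearMap.range_eq_top.2 hqsurj]
  -- H¹ is annihilated by s
  have hann : ∀ x : groupCohomology.H1 A, s • x = 0 := by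
    intro x
    obtain ⟨f, rfl⟩ := hqsurj x
    have hcob : ⇑(s • f) ∈ groupCohomology.coboundaries₁ A := by
      rw [groupCohomology.coboundaries₁]
      set x₀ : A := ∑ h : G, (f : G → A) h with hx₀
      refine ⟨-x₀, funext fun g => ?_⟩
      have hrel : ∀ g h : G, (f : G → A) (g * h) = A.ρ g ((f : G → A) h) + (f : G → A) g :=
        (groupCohomology.mem_cocycles₁_iff (f : G → A)).1 f.2
      have hsum : ∑ h : G, (f : G → A) (g * h) = x₀ := by
        rw [hx₀]
        exact Fintype.sum_equiv (Equiv.mulLeft g) _ _ fun h => rfl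
      have hkey : x₀ = A.ρ g x₀ + s • (f : G → A) g := by
        calc x₀ = ∑ h : G, (f : G → A) (g * h) := hsum.symm
          _ = ∑ h : G, (A.ρ g ((f : G → A) h) + (f : G → A) g) := by simp_rw [hrel g]
          _ = A.ρ g x₀ + s • (f : G → A) g := by
              rw [Finset.sum_add_distrib, ← map_sum, ← hx₀, Finset.sum_const,
                Finset.card_univ, hs]
      have hgoal : x₀ - A.ρ g x₀ = s • (f : G → A) g := by
        rw [sub_eq_iff_eq_add, add_comm]; exact hkey
      have hneg : A.ρ g (-x₀) - (-x₀) = x₀ - A.ρ g x₀ := by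
        rw [map_neg]; abel
      rw [groupCohomology.d₀₁_hom_apply, hneg, hgoal]
      norm_cast
    have hq' : s • q f = q (s • f) := (map_nsmul q s f).symm
    rw [hq']
    exact (groupCohomology.H1π_eq_zero_iff _).2 hcob
  obtain ⟨hfin, hdvd⟩ := aux_card_dvd hs0 hann (q ∘ v) hqv
  have hdvd' : Nat.card (groupCohomology.H1 A) ∣ s ^ m := by simpa using hdvd
  exact ⟨hfin, dvd_trans hdvd' (pow_dvd_pow s (by rw [mul_comm]; exact hm))⟩
end

section
/- For any prime p > 2, the kernel of the reduction map GL_d(ℤ) → GL_d(ℤ/pℤ) is torsion-free; consequently the order of every finite subgroup of GL_d(ℤ) divides |GL_d(ℤ/3ℤ)| = ∏_{i=0}^{d-1} (3^d - 3^i). -/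
open Matrix

lemma entry_dvd_mul {d : ℕ} {c e : ℤ} {X Y : Matrix (Fin d) (Fin d) ℤ}
    (hX : ∀ i j, c ∣ X i j) (hY : ∀ i j, e ∣ Y i j) : ∀ i j, c * e ∣ (X * Y) i j := by
  intro i j
  rw [Matrix.mul_apply]
  exact Finset.dvd_sum fun l _ => mul_dvd_mul (hX i l) (hY l j)

lemma entry_dvd_pow {d : ℕ} {c : ℤ} {M : Matrix (Fin d) (Fin d) ℤ}
    (h : ∀ i j, c ∣ M i j) : ∀ n i j, c ^ n ∣ (M ^ n) i j := by
  intro n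
  induction n with
  | zero => intro i j; simp
  | succ n ih =>
    intro i j
    rw [pow_succ, pow_succ]
    exact entry_dvd_mul ih h i j

lemma mink_matrix {d : ℕ} (p q : ℕ) (hp : p.Prime) (hp2 : 2 < p) (hq : q.Prime)
    (M : Matrix (Fin d) (Fin d) ℤ) (hM : ∀ i j, (p : ℤ) ∣ M i j)
    (h : (M + 1) ^ q = 1) : M = 0 := by
  by_contra hM0
  -- find a nonzero entry
  have hex : ∃ i j, M i j ≠ 0 := by
    by_contra hc
    push_neg at hc
    exact hM0 (Matrix.ext fun i j => hc i j)
  obtain ⟨i₀, j₀, hij₀⟩ := hex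
  -- property S m
  set S : ℕ → Prop := fun m => ∀ i j, (p : ℤ) ^ m ∣ M i j with hS
  have hexn : ∃ m, ¬ S m := by
    refine ⟨(M i₀ j₀).natAbs, fun hall => ?_⟩
    have h1 := Int.le_of_dvd (abs_pos.mpr hij₀) ((dvd_abs _ _).mpr (hall i₀ j₀))
    have h2 : ((M i₀ j₀).natAbs : ℤ) < (p : ℤ) ^ (M i₀ j₀).natAbs := by
      exact_mod_cast (Nat.lt_pow_self hp.one_lt : (M i₀ j₀).natAbs < p ^ (M i₀ j₀).natAbs)
    rw [Int.abs_eq_natAbs] at h1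
    omega
  classical
  set n := Nat.find hexn with hn
  have hnspec : ¬ S n := Nat.find_spec hexn
  have hS0 : S 0 := fun i j => by simp
  have hS1 : S 1 := fun i j => by simpa using hM i j
  have hn2 : 2 ≤ n := by
    rcases Nat.lt_or_ge n 2 with h' | h'
    · interval_cases n
      · exact absurd hS0 hnspec
      · exact absurd hS1 hnspec
    · exact h'
  set k := n - 1 with hk
  have hk1 : 1 ≤ k := by omega
  have hSk : S k := by
    by_contra hc
    exact absurd (Nat.find_min hexn (by omega : k < n)) (not_not.mpr hc)
  have hnSk1 : ¬ S (k + 1) := by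
    have : k + 1 = n := by omega
    rwa [this]
  -- binomial expansion
  obtain ⟨e, rfl⟩ : ∃ e, q = e + 2 := ⟨q - 2, by have := hq.two_le; omega⟩
  have hexp := (Commute.one_right M).add_pow (e + 2)
  rw [h] at hexp
  -- 1 = ∑ m in range (e+3), M ^ m * 1 ^ (e+2-m) * (choose (e+2) m)
  rw [Finset.sum_range_succ'] at hexp
  rw [Finset.sum_range_succ'] at hexp
  simp only [one_pow, mul_one, pow_zero, pow_one, Nat.choose_zero_right, Nat.choose_one_right,
    Nat.cast_one, one_mul, Nat.cast_ofNat, zero_add, Nat.choose_one_right] at hexp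
  -- now hexp : 1 = ∑ ... + M * (e+2) + 1  (roughly)

  have hsum := add_eq_right.mp hexp.symm
  have trick : ∀ (c : ℕ) (X : Matrix (Fin d) (Fin d) ℤ) (i j : Fin d),
      (X * (c : Matrix (Fin d) (Fin d) ℤ)) i j = X i j * (c : ℤ) := by
    intro c X i j
    rw [← (Nat.cast_commute c X).eq, ← nsmul_eq_mul, Matrix.smul_apply, nsmul_eq_mul, mul_comm]
  have hent : ∀ i j, M i j * ((e + 2 : ℕ) : ℤ)
      = - ∑ x ∈ Finset.range (e + 1), (M ^ (x + 2)) i j * ((e + 2).choose (x + 2) : ℤ) := by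
    intro i j
    have h0 := congrFun (congrFun hsum i) j
    simp only [Matrix.add_apply, Matrix.zero_apply, Matrix.sum_apply, pow_one, trick] at h0
    rw [eq_neg_iff_add_eq_zero, add_comm]
    exact h0
  have hdvd2 : ∀ (x : ℕ) (i j : Fin d), (p : ℤ) ^ (k * (x + 2)) ∣ (M ^ (x + 2)) i j := by
    intro x i j
    have := entry_dvd_pow hSk (x + 2) i j
    rwa [← pow_mul] at this
  apply hnSk1
  intro i j
  by_cases hqp : e + 2 = p
  · -- q = p case
    have hsumdvd : (p : ℤ) ^ (k + 2) ∣
        ∑ x ∈ Finset.range (e + 1), (M ^ (x + 2)) i j * ((e + 2).choose (x + 2) : ℤ) := by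
      refine Finset.dvd_sum fun x hx => ?_
      rcases Nat.eq_zero_or_pos x with rfl | hx1
      · have h1 : (p : ℤ) ^ (k * 2) ∣ (M ^ 2) i j := by simpa using hdvd2 0 i j
        have h2 : (p : ℤ) ∣ ((e + 2).choose 2 : ℤ) := by
          have := hp.dvd_choose_self (k := 2) (by norm_num) hp2
          rw [← hqp] at this ⊢
          exact_mod_cast this
        calc (p : ℤ) ^ (k + 2) ∣ (p : ℤ) ^ (k * 2) * p := by
              rw [← pow_succ]; exact pow_dvd_pow _ (by omega)
          _ ∣ (M ^ (0 + 2)) i j * ((e + 2).choose (0 + 2) : ℤ) := by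
              simpa using mul_dvd_mul h1 h2
      · refine dvd_mul_of_dvd_left ?_ _
        exact dvd_trans (pow_dvd_pow _ (by nlinarith : k + 2 ≤ k * (x + 2))) (hdvd2 x i j)
    have hqd : (p : ℤ) ^ (k + 2) ∣ M i j * ((e + 2 : ℕ) : ℤ) := by
      rw [hent i j]; exact Dvd.dvd.neg_right hsumdvd
    have hpc : ((e + 2 : ℕ) : ℤ) = (p : ℤ) := by exact_mod_cast hqp
    rw [hpc] at hqd
    rw [pow_succ] at hqd
    exact (mul_dvd_mul_iff_right (by exact_mod_cast hp.pos.ne' : (p : ℤ) ≠ 0)).mp hqd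
  · -- q ≠ p case
    have hsumdvd : (p : ℤ) ^ (k + 1) ∣
        ∑ x ∈ Finset.range (e + 1), (M ^ (x + 2)) i j * ((e + 2).choose (x + 2) : ℤ) := by
      refine Finset.dvd_sum fun x hx => ?_
      refine dvd_mul_of_dvd_left ?_ _
      exact dvd_trans (pow_dvd_pow _ (by nlinarith : k + 1 ≤ k * (x + 2))) (hdvd2 x i j)
    have hqd : (p : ℤ) ^ (k + 1) ∣ M i j * ((e + 2 : ℕ) : ℤ) := by
      rw [hent i j]; exact Dvd.dvd.neg_right hsumdvd
    have hcop : IsCoprime ((p : ℤ) ^ (k + 1)) ((e + 2 : ℕ) : ℤ) := by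
      have h1 : Nat.Coprime (p ^ (k + 1)) (e + 2) :=
        Nat.Coprime.pow_left _ ((Nat.coprime_primes hp hq).mpr fun h => hqp h.symm)
      have := Nat.isCoprime_iff_coprime.mpr h1
      exact_mod_cast this
    exact hcop.dvd_of_dvd_mul_right hqd

lemma ker_entries {d p : ℕ} (x : GL (Fin d) ℤ)
    (hx : x ∈ (Matrix.GeneralLinearGroup.map (n := Fin d) (Int.castRingHom (ZMod p))).ker) :
    ∀ i j, (p : ℤ) ∣ ((x : Matrix (Fin d) (Fin d) ℤ) - 1) i j := by
  intro i j
  have h1 := MonoidHom.mem_ker.mp hx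
  have h2 : (Matrix.GeneralLinearGroup.map (n := Fin d) (Int.castRingHom (ZMod p)) x) i j
      = (1 : GL (Fin d) (ZMod p)) i j := by rw [h1]
  rw [Matrix.GeneralLinearGroup.map_apply] at h2
  rw [← ZMod.intCast_zmod_eq_zero_iff_dvd, Matrix.sub_apply]
  push_cast
  simp only [Int.coe_castRingHom] at h2
  rw [h2]
  rcases eq_or_ne i j with rfl | hij
  · simp [Matrix.one_apply, Units.val_one]
  · simp [Matrix.one_apply, hij, Units.val_one]

lemma mink_units {d p : ℕ} (hp : p.Prime) (hp2 : 2 < p) (x : GL (Fin d) ℤ)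
    (hx : x ∈ (Matrix.GeneralLinearGroup.map (n := Fin d) (Int.castRingHom (ZMod p))).ker)
    (hfin : IsOfFinOrder x) : x = 1 := by
  by_contra hx1
  set N := orderOf x with hN
  have hN0 : 0 < N := hfin.orderOf_pos
  have hN1 : N ≠ 1 := fun h => hx1 (orderOf_eq_one_iff.mp h)
  have hN2 : 2 ≤ N := by omega
  set q := N.minFac with hq
  have hqp : q.Prime := Nat.minFac_prime hN1
  have hqd : q ∣ N := Nat.minFac_dvd N
  set y := x ^ (N / q) with hy
  have hyq : y ^ q = 1 := by
    rw [hy, ← pow_mul, Nat.div_mul_cancel hqd, hN, pow_orderOf_eq_one]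
  have hy1 : y ≠ 1 := by
    intro hcon
    have := orderOf_dvd_of_pow_eq_one (hy ▸ hcon : x ^ (N / q) = 1)
    rw [← hN] at this
    have hlt : N / q < N := Nat.div_lt_self hN0 hqp.one_lt
    have hpos : 0 < N / q := Nat.div_pos (Nat.minFac_le hN0) (Nat.minFac_pos N)
    exact absurd (Nat.le_of_dvd hpos this) (by omega)
  have hymem : y ∈ (Matrix.GeneralLinearGroup.map (n := Fin d) (Int.castRingHom (ZMod p))).ker :=
    Subgroup.pow_mem _ hx _
  have hMzero := mink_matrix p q hp hp2 hqp ((y : Matrix (Fin d) (Fin d) ℤ) - 1)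
    (ker_entries y hymem) (by
      rw [sub_add_cancel, ← Units.val_pow_eq_pow_val, hyq, Units.val_one])
  apply hy1
  ext i j
  have := congrFun (congrFun (sub_eq_zero.mp hMzero) i) j
  simpa using this

/-- For any prime `p > 2`, the kernel of the reduction map `GL d ℤ → GL d (ℤ/pℤ)` is
torsion-free; consequently the order of every finite subgroup of `GL d ℤ` divides
`|GL d (ℤ/3ℤ)| = ∏_{i=0}^{d-1} (3^d - 3^i)`. -/
theorem minkowski_lemma_and_finite_subgroup_order (d p : ℕ) (hp : p.Prime) (hp2 : 2 < p) :
    (∀ x ∈ (Matrix.GeneralLinearGroup.map (n := Fin d) (Int.castRingHom (ZMod p))).ker,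
        IsOfFinOrder x → x = 1) ∧
    Nat.card (GL (Fin d) (ZMod 3)) = ∏ i ∈ Finset.range d, (3 ^ d - 3 ^ i) ∧
    (∀ H : Subgroup (GL (Fin d) ℤ), Finite H →
        Nat.card H ∣ ∏ i ∈ Finset.range d, (3 ^ d - 3 ^ i)) := by
  have h3 : Fact (Nat.Prime 3) := ⟨by norm_num⟩
  have hcard : Nat.card (GL (Fin d) (ZMod 3)) = ∏ i ∈ Finset.range d, (3 ^ d - 3 ^ i) := by
    rw [Matrix.card_GL_field]
    rw [Fin.prod_univ_eq_prod_range (fun i => Fintype.card (ZMod 3) ^ d - Fintype.card (ZMod 3) ^ i)]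
    simp [ZMod.card]
  refine ⟨fun x hx hfin => mink_units hp hp2 x hx hfin, hcard, fun H hH => ?_⟩
  rw [← hcard]
  refine Subgroup.card_dvd_of_injective
    ((Matrix.GeneralLinearGroup.map (n := Fin d) (Int.castRingHom (ZMod 3))).comp H.subtype) ?_
  rw [injective_iff_map_eq_one]
  intro a ha
  have hmem : (a : GL (Fin d) ℤ) ∈
      (Matrix.GeneralLinearGroup.map (n := Fin d) (Int.castRingHom (ZMod 3))).ker := ha
  have hfin : IsOfFinOrder (a : GL (Fin d) ℤ) := by
    have : IsOfFinOrder a := isOfFinOrder_of_finite a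
    exact H.subtype.isOfFinOrder this
  have := mink_units (p := 3) (by norm_num) (by norm_num) (a : GL (Fin d) ℤ) hmem hfin
  exact Subtype.ext this
end

section
/- Let G be a group and let H, U be subgroups of G such that the product set H·U contains the commutator subgroup [G,G]. Then H·U is a normal subgroup of G. -/
open scoped Pointwise
open scoped commutatorElement

lemma comm_mem_HU {G : Type} [Group G] (H U : Subgroup G)
    (h : (commutator G : Set G) ⊆ (H : Set G) * (U : Set G)) (a b : G) :
    ⁅a, b⁆ ∈ (H : Set G) * (U : Set G) := by
  apply h
  exact Subgroup.commutator_mem_commutator (Subgroup.mem_top a) (Subgroup.mem_top b)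

lemma swap_mem {G : Type} [Group G] (H U : Subgroup G)
    (h : (commutator G : Set G) ⊆ (H : Set G) * (U : Set G)) {u g : G}
    (hu : u ∈ U) (hg : g ∈ H) : u * g ∈ (H : Set G) * (U : Set G) := by
  obtain ⟨h', hh', u', hu', heq⟩ := comm_mem_HU H U h g⁻¹ u
  have : u * g = (g * h') * (u' * u) := by
    have : g⁻¹ * u * g * u⁻¹ = h' * u' := by simpa [commutatorElement_def] using heq.symm
    have := congrArg (fun x => g * x * (u⁻¹)⁻¹) this
    simpa [mul_assoc] using this
  rw [this]
  exact Set.mul_mem_mul (mul_mem hg hh') (mul_mem hu' hu)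

/-- Let `G` be a group and `H`, `U` subgroups of `G` such that the product set `H * U`
contains the commutator subgroup `[G, G]`. Then `H * U` is a normal subgroup of `G`. -/
theorem product_normal_of_contains_commutator (G : Type) [Group G] (H U : Subgroup G)
    (h : (commutator G : Set G) ⊆ (H : Set G) * (U : Set G)) :
    ∃ N : Subgroup G, (N : Set G) = (H : Set G) * (U : Set G) ∧ N.Normal := by
  refine ⟨{ carrier := (H : Set G) * (U : Set G)
            one_mem' := ⟨1, one_mem H, 1, one_mem U, one_mul 1⟩
            mul_mem' := ?_
            inv_mem' := ?_ }, rfl, ?_⟩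
  · rintro a b ⟨h1, hh1, u1, hu1, rfl⟩ ⟨h2, hh2, u2, hu2, rfl⟩
    obtain ⟨h3, hh3, u3, hu3, heq⟩ := swap_mem H U h hu1 hh2
    have : h1 * u1 * (h2 * u2) = (h1 * h3) * (u3 * u2) := by
      rw [show h1 * u1 * (h2 * u2) = h1 * (u1 * h2) * u2 by group, ← heq]; group
    rw [this]
    exact Set.mul_mem_mul (mul_mem hh1 hh3) (mul_mem hu3 hu2)
  · rintro a ⟨h1, hh1, u1, hu1, rfl⟩
    simpa [mul_inv_rev] using swap_mem H U h (inv_mem hu1) (inv_mem hh1)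
  · constructor
    rintro n ⟨h1, hh1, u1, hu1, rfl⟩ g
    have key : g * (h1 * u1) * g⁻¹ = ⁅g, h1 * u1⁆ * (h1 * u1) := by group
    show g * (h1 * u1) * g⁻¹ ∈ (H : Set G) * (U : Set G)
    rw [key]
    obtain ⟨h2, hh2, u2, hu2, heq⟩ := comm_mem_HU H U h g (h1 * u1)
    rw [← heq]
    obtain ⟨h3, hh3, u3, hu3, heq3⟩ := swap_mem H U h hu2 hh1
    have : h2 * u2 * (h1 * u1) = (h2 * h3) * (u3 * u1) := by
      rw [show h2 * u2 * (h1 * u1) = h2 * (u2 * h1) * u1 by group, ← heq3]; group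
    rw [this]
    exact Set.mul_mem_mul (mul_mem hh2 hh3) (mul_mem hu3 hu1)
end
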